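/- arXiv:math/0312028 — 2 statements merged into one kernel-verified Lean document; each statement's English description precedes it below -/
import Mathlib

section
/- Let s1, s2, s3 be real numbers with s1² + s2² - s3² = -1 and s3 < 0. Let S = [[i·s3, s1+i·s2],[s1-i·s2, -i·s3]], σ₃ = [[1,0],[0,-1]], and for a complex number γ with |γ| = 1 define G = (1/√(2(1-s3)))·(S - i·σ₃)·diag(γ, γ̄). Then G is invertible and i·G⁻¹·S·G = σ₃. -/
open Complex Matrix

theorem gauge_matrix_conjugates_S_to_sigma3 (s1 s2 s3 : ℝ)
    (h : s1 ^ 2 + s2 ^ 2 - s3 ^ 2 = -1) (hs3 : s3 < 0)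
    (γ : ℂ) (hγ : ‖γ‖ = 1) :
    let S : Matrix (Fin 2) (Fin 2) ℂ :=
      !![Complex.I * s3, (s1 : ℂ) + Complex.I * s2;
         (s1 : ℂ) - Complex.I * s2, -(Complex.I * s3)]
    let σ₃ : Matrix (Fin 2) (Fin 2) ℂ := !![1, 0; 0, -1]
    let G : Matrix (Fin 2) (Fin 2) ℂ :=
      ((1 / Real.sqrt (2 * (1 - s3)) : ℝ) : ℂ) •
        ((S - Complex.I • σ₃) * Matrix.diagonal ![γ, (starRingEnd ℂ) γ])
    IsUnit G ∧ Complex.I • (G⁻¹ * S * G) = σ₃ := by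
  intro S σ₃ G
  set c : ℂ := ((1 / Real.sqrt (2 * (1 - s3)) : ℝ) : ℂ) with hc_def
  set D : Matrix (Fin 2) (Fin 2) ℂ := Matrix.diagonal ![γ, (starRingEnd ℂ) γ] with hD_def
  have hpos : (0:ℝ) < 2 * (1 - s3) := by nlinarith
  have hsqrt : Real.sqrt (2 * (1 - s3)) ≠ 0 := by positivity
  have hsq : (Real.sqrt (2 * (1 - s3)))^2 = 2 * (1 - s3) := Real.sq_sqrt hpos.le
  have hγ1 : γ * (starRingEnd ℂ) γ = 1 := by
    rw [Complex.mul_conj, ← Complex.sq_norm, hγ]; norm_num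
  have hC : (s1:ℂ)^2 + (s2:ℂ)^2 - (s3:ℂ)^2 = -1 := by
    have := congrArg (Complex.ofReal) h
    push_cast at this
    exact_mod_cast this
  -- c^2 * (2*(1-s3)) = 1
  have hc2 : c^2 * (2*(1-(s3:ℂ))) = 1 := by
    rw [hc_def]
    have : ((1 / Real.sqrt (2 * (1 - s3)) : ℝ))^2 * (2*(1-s3)) = 1 := by
      rw [div_pow, one_pow, hsq]
      field_simp
      exact div_self (sub_pos.mpr (by linarith : s3 < 1)).ne'
    calc (((1 / Real.sqrt (2 * (1 - s3)) : ℝ) : ℂ))^2 * (2*(1-(s3:ℂ)))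
        = (((1 / Real.sqrt (2 * (1 - s3)) : ℝ))^2 * (2*(1-s3)) : ℝ) := by push_cast; ring
      _ = 1 := by rw [this]; norm_num
  -- S * S = -1
  have hS2 : S * S = -1 := by
    ext i j
    fin_cases i <;> fin_cases j <;>
      simp [S, Matrix.mul_apply, Fin.sum_univ_two, Matrix.one_apply] <;>
      first
      | linear_combination ((s3:ℂ)^2-(s2:ℂ)^2) * Complex.I_sq + hC
      | ring
  -- σ₃ * σ₃ = 1
  have hσ2 : σ₃ * σ₃ = 1 := by
    ext i j
    fin_cases i <;> fin_cases j <;> simp [σ₃, Matrix.mul_apply, Fin.sum_univ_two]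
  -- σ₃ is diagonal, hence commutes with D
  have hσd : σ₃ = Matrix.diagonal ![1, -1] := by
    ext i j
    fin_cases i <;> fin_cases j <;> simp [σ₃, Matrix.diagonal]
  have hcomm : D * σ₃ = σ₃ * D := by
    rw [hσd, hD_def, Matrix.diagonal_mul_diagonal, Matrix.diagonal_mul_diagonal]
    funext i
    fin_cases i <;> simp [mul_comm]
  -- key algebraic identity
  have hkey0 : Complex.I • (S * (S - Complex.I • σ₃)) = (S - Complex.I • σ₃) * σ₃ := by
    rw [Matrix.mul_sub, Matrix.sub_mul, Matrix.mul_smul, Matrix.smul_mul, hS2, hσ2,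
      smul_sub, smul_smul, Complex.I_mul_I]
    module
  -- determinant
  have hSd : S - Complex.I • σ₃ =
      !![Complex.I * s3 - Complex.I, (s1:ℂ) + Complex.I * s2;
         (s1:ℂ) - Complex.I * s2, -(Complex.I * s3) + Complex.I] := by
    ext i j
    fin_cases i <;> fin_cases j <;> simp [S, σ₃]
  have hdet2 : (S - Complex.I • σ₃).det = 2*(1-(s3:ℂ)) := by
    rw [hSd, Matrix.det_fin_two_of]
    linear_combination ((s2:ℂ)^2 - ((s3:ℂ)-1)^2) * Complex.I_sq - hC
  have hdetD : D.det = 1 := by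
    rw [hD_def, Matrix.det_diagonal]
    simp [Fin.prod_univ_two, hγ1]
  have hdet : G.det = 1 := by
    show (c • ((S - Complex.I • σ₃) * D)).det = 1
    rw [Matrix.det_smul, Matrix.det_mul, hdet2, hdetD, Fintype.card_fin]
    rw [mul_one]
    linear_combination hc2
  have hunit : IsUnit G := by
    rw [Matrix.isUnit_iff_isUnit_det, hdet]; exact isUnit_one
  refine ⟨hunit, ?_⟩
  have key : Complex.I • (S * G) = G * σ₃ := by
    show Complex.I • (S * (c • ((S - Complex.I • σ₃) * D))) = (c • ((S - Complex.I • σ₃) * D)) * σ₃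
    rw [Matrix.mul_smul, Matrix.smul_mul, smul_comm]
    congr 1
    rw [← Matrix.mul_assoc, Matrix.mul_assoc _ D σ₃, hcomm, ← Matrix.mul_assoc,
      ← Matrix.smul_mul, hkey0]
  have hGinv : G⁻¹ * G = 1 := Matrix.nonsing_inv_mul G (by rw [hdet]; exact isUnit_one)
  clear_value G
  calc Complex.I • (G⁻¹ * S * G) = G⁻¹ * (Complex.I • (S * G)) := by
        rw [Matrix.mul_smul, Matrix.mul_assoc]
    _ = G⁻¹ * (G * σ₃) := by rw [key]
    _ = σ₃ := by rw [← Matrix.mul_assoc, hGinv, Matrix.one_mul]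
end

section
/- Let a, b, α be real numbers with b ≠ 0 and α² = b²/16. Define, for a + bt ≠ 0, r(t,z) = (α·z̄/(a+bt))·e^{-i·b·z·z̄/(2(a+bt))} and u(t,z) = 2α²·z·z̄/(a+bt)². Then i·r_t - r_{z z̄} + 2·u·r = 0 identically. -/
open Complex

/-- `z = (x₁ + i x₂)/2`. -/
noncomputable def zc (x y : ℝ) : ℂ := ((x : ℂ) + Complex.I * y) / 2

/-- The explicit `r(t,z) = (α z̄/(a+bt)) e^{-i b z z̄ /(2(a+bt))}`. -/
noncomputable def rf (a b α t x y : ℝ) : ℂ :=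
  ((α : ℂ) * (starRingEnd ℂ) (zc x y) / ((a : ℂ) + b * t)) *
    Complex.exp (-(Complex.I * b * zc x y * (starRingEnd ℂ) (zc x y) / (2 * ((a : ℂ) + b * t))))

/-- `∂_{z̄} r = (∂_{x₁} + i ∂_{x₂}) r`. -/
noncomputable def rfZbar (a b α t x y : ℝ) : ℂ :=
  deriv (fun s => rf a b α t s y) x + Complex.I * deriv (fun s => rf a b α t x s) y

/-- `r_{z z̄} = ∂_z ∂_{z̄} r`, with `∂_z = ∂_{x₁} - i ∂_{x₂}`. -/
noncomputable def rfZZbar (a b α t x y : ℝ) : ℂ :=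
  deriv (fun s => rfZbar a b α t s y) x - Complex.I * deriv (fun s => rfZbar a b α t x s) y

/-- The explicit `u(t,z) = 2 α² z z̄ /(a+bt)²`. -/
noncomputable def uf (a b α t x y : ℝ) : ℂ :=
  2 * (α : ℂ) ^ 2 * zc x y * (starRingEnd ℂ) (zc x y) / ((a : ℂ) + b * t) ^ 2

/- ==================== auxiliary material ==================== -/

namespace SecondEq

noncomputable def cC (a b t : ℝ) : ℂ := (a:ℂ) + b*t

noncomputable def EE (a b t x y : ℝ) : ℂ :=
  Complex.exp (-(Complex.I*(b:ℂ)*((x:ℂ)^2+(y:ℂ)^2)) / (8*(cC a b t)))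

lemma hdA (p q r s w : ℂ) :
    HasDerivAt (fun w : ℂ => (p*w+q) * Complex.exp (r*w^2+s))
      (p * Complex.exp (r*w^2+s) + (p*w+q) * (Complex.exp (r*w^2+s) * (2*r*w))) w := by
  have h1 : HasDerivAt (fun w : ℂ => p*w+q) p w := by
    simpa using ((hasDerivAt_id w).const_mul p).add_const q
  have h2 : HasDerivAt (fun w : ℂ => r*w^2+s) (2*r*w) w := by
    have := ((hasDerivAt_pow 2 w).const_mul r).add_const s
    simpa [mul_comm, mul_assoc, mul_left_comm] using this
  exact h1.mul h2.cexp

lemma hdB (p q r s w : ℂ) :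
    HasDerivAt (fun w : ℂ => (p*w^2+q) * Complex.exp (r*w^2+s))
      ((2*p*w) * Complex.exp (r*w^2+s) + (p*w^2+q) * (Complex.exp (r*w^2+s) * (2*r*w))) w := by
  have h1 : HasDerivAt (fun w : ℂ => p*w^2+q) (2*p*w) w := by
    have := ((hasDerivAt_pow 2 w).const_mul p).add_const q
    simpa [mul_comm, mul_assoc, mul_left_comm] using this
  have h2 : HasDerivAt (fun w : ℂ => r*w^2+s) (2*r*w) w := by
    have := ((hasDerivAt_pow 2 w).const_mul r).add_const s
    simpa [mul_comm, mul_assoc, mul_left_comm] using this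
  exact h1.mul h2.cexp

lemma hdC (K L c0 b0 w : ℂ) (h : c0 + b0*w ≠ 0) :
    HasDerivAt (fun w : ℂ => K/(c0+b0*w) * Complex.exp (L/(c0+b0*w)))
      ((K * (-b0/(c0+b0*w)^2)) * Complex.exp (L/(c0+b0*w)) +
       (K/(c0+b0*w)) * (Complex.exp (L/(c0+b0*w)) * (L * (-b0/(c0+b0*w)^2)))) w := by
  have h0 : HasDerivAt (fun w : ℂ => c0+b0*w) b0 w := by
    simpa [add_comm] using ((hasDerivAt_id w).const_mul b0).add_const c0
  have hinv : HasDerivAt (fun w : ℂ => (c0+b0*w)⁻¹) (-b0/(c0+b0*w)^2) w := by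
    exact h0.inv h
  have h1 : HasDerivAt (fun w : ℂ => K/(c0+b0*w)) (K * (-b0/(c0+b0*w)^2)) w := by
    simpa [div_eq_mul_inv, mul_assoc] using hinv.const_mul K
  have h2 : HasDerivAt (fun w : ℂ => L/(c0+b0*w)) (L * (-b0/(c0+b0*w)^2)) w := by
    simpa [div_eq_mul_inv, mul_assoc] using hinv.const_mul L
  exact h1.mul h2.cexp

lemma conj_zc (x y : ℝ) : (starRingEnd ℂ) (zc x y) = ((x:ℂ) - Complex.I * y)/2 := by
  simp [zc, map_div₀, Complex.conj_ofReal, map_ofNat]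
  ring

lemma hzz (x y : ℝ) : zc x y * (starRingEnd ℂ) (zc x y) = (((x:ℂ)^2+(y:ℂ)^2)/4) := by
  rw [conj_zc, zc]
  linear_combination (-(y:ℂ)^2/4) * Complex.I_sq

lemma rf_form (a b α t x y : ℝ) :
    rf a b α t x y = ((α:ℂ) * ((x:ℂ) - Complex.I*y) / 2) / (cC a b t) * EE a b t x y := by
  rw [rf, show Complex.I * (b:ℂ) * zc x y * (starRingEnd ℂ) (zc x y)
      = Complex.I * (b:ℂ) * (zc x y * (starRingEnd ℂ) (zc x y)) from by ring, hzz, conj_zc,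
      show ((a:ℂ) + (b:ℂ)*(t:ℂ)) = cC a b t from rfl, EE]
  congr 1
  · ring
  · congr 1
    ring

lemma deriv_rf_x (a b α t x y : ℝ) :
    deriv (fun s : ℝ => rf a b α t s y) x =
      EE a b t x y * ((α:ℂ)/(2*cC a b t)
        - Complex.I*b*α*(x:ℂ)*((x:ℂ)-Complex.I*y)/(8*(cC a b t)^2)) := by
  set c := cC a b t with hc
  have hfun : (fun s : ℝ => rf a b α t s y)
      = fun s : ℝ => (((α:ℂ)/(2*c))*(s:ℂ) + (-(Complex.I*α*y)/(2*c))) *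
          Complex.exp ((-Complex.I*b/(8*c))*(s:ℂ)^2 + (-Complex.I*b*(y:ℂ)^2/(8*c))) := by
    funext s
    rw [rf_form, ← hc]
    rw [show ((-Complex.I*(b:ℂ)/(8*c))*(s:ℂ)^2 + (-Complex.I*b*(y:ℂ)^2/(8*c)))
        = -(Complex.I*(b:ℂ)*((s:ℂ)^2+(y:ℂ)^2)) / (8*c) from by ring]
    rw [EE, ← hc]
    ring
  rw [hfun, ((hdA ((α:ℂ)/(2*c)) (-(Complex.I*α*y)/(2*c)) (-Complex.I*b/(8*c))
      (-Complex.I*b*(y:ℂ)^2/(8*c)) (x:ℂ)).comp_ofReal).deriv]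
  rw [show ((-Complex.I*(b:ℂ)/(8*c))*(x:ℂ)^2 + (-Complex.I*b*(y:ℂ)^2/(8*c)))
      = -(Complex.I*(b:ℂ)*((x:ℂ)^2+(y:ℂ)^2)) / (8*c) from by ring]
  rw [show Complex.exp (-(Complex.I*(b:ℂ)*((x:ℂ)^2+(y:ℂ)^2)) / (8*c)) = EE a b t x y from rfl]
  ring

lemma deriv_rf_y (a b α t x y : ℝ) :
    deriv (fun s : ℝ => rf a b α t x s) y =
      EE a b t x y * (-(Complex.I*(α:ℂ))/(2*cC a b t)
        - Complex.I*b*α*(y:ℂ)*((x:ℂ)-Complex.I*y)/(8*(cC a b t)^2)) := by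
  set c := cC a b t with hc
  have hfun : (fun s : ℝ => rf a b α t x s)
      = fun s : ℝ => ((-(Complex.I*(α:ℂ))/(2*c))*(s:ℂ) + ((α:ℂ)*x/(2*c))) *
          Complex.exp ((-Complex.I*b/(8*c))*(s:ℂ)^2 + (-Complex.I*b*(x:ℂ)^2/(8*c))) := by
    funext s
    rw [rf_form, ← hc]
    rw [show ((-Complex.I*(b:ℂ)/(8*c))*(s:ℂ)^2 + (-Complex.I*b*(x:ℂ)^2/(8*c)))
        = -(Complex.I*(b:ℂ)*((x:ℂ)^2+(s:ℂ)^2)) / (8*c) from by ring]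
    rw [EE, ← hc]
    ring
  rw [hfun, ((hdA (-(Complex.I*(α:ℂ))/(2*c)) ((α:ℂ)*x/(2*c)) (-Complex.I*b/(8*c))
      (-Complex.I*b*(x:ℂ)^2/(8*c)) (y:ℂ)).comp_ofReal).deriv]
  rw [show ((-Complex.I*(b:ℂ)/(8*c))*(y:ℂ)^2 + (-Complex.I*b*(x:ℂ)^2/(8*c)))
      = -(Complex.I*(b:ℂ)*((x:ℂ)^2+(y:ℂ)^2)) / (8*c) from by ring]
  rw [show Complex.exp (-(Complex.I*(b:ℂ)*((x:ℂ)^2+(y:ℂ)^2)) / (8*c)) = EE a b t x y from rfl]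
  ring

lemma rfZbar_eq (a b α t x y : ℝ) :
    rfZbar a b α t x y =
      EE a b t x y * ((α:ℂ)/(cC a b t)
        - Complex.I*b*α*((x:ℂ)^2+(y:ℂ)^2)/(8*(cC a b t)^2)) := by
  rw [rfZbar, deriv_rf_x, deriv_rf_y]
  set c := cC a b t
  set E := EE a b t x y
  linear_combination (E*(Complex.I*(b:ℂ)*α*(y:ℂ)^2/(8*c^2) - (α:ℂ)/(2*c))) * Complex.I_sq

lemma rfZZbar_eq (a b α t x y : ℝ) :
    rfZZbar a b α t x y =
      EE a b t x y * ((x:ℂ)-Complex.I*y) *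
        (-(Complex.I*(b:ℂ)*α)/(2*(cC a b t)^2)
          - (b:ℂ)^2*α*((x:ℂ)^2+(y:ℂ)^2)/(32*(cC a b t)^3)) := by
  set c := cC a b t with hc
  have hdx : deriv (fun s : ℝ => rfZbar a b α t s y) x =
      (2*(-Complex.I*(b:ℂ)*α/(8*c^2))*(x:ℂ)) *
        Complex.exp ((-Complex.I*b/(8*c))*(x:ℂ)^2 + (-Complex.I*b*(y:ℂ)^2/(8*c)))
      + ((-Complex.I*(b:ℂ)*α/(8*c^2))*(x:ℂ)^2 + ((α:ℂ)/c - Complex.I*b*α*(y:ℂ)^2/(8*c^2))) *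
        (Complex.exp ((-Complex.I*b/(8*c))*(x:ℂ)^2 + (-Complex.I*b*(y:ℂ)^2/(8*c))) *
          (2*(-Complex.I*b/(8*c))*(x:ℂ))) := by
    have hfun : (fun s : ℝ => rfZbar a b α t s y)
        = fun s : ℝ => ((-Complex.I*(b:ℂ)*α/(8*c^2))*(s:ℂ)^2
            + ((α:ℂ)/c - Complex.I*b*α*(y:ℂ)^2/(8*c^2))) *
            Complex.exp ((-Complex.I*b/(8*c))*(s:ℂ)^2 + (-Complex.I*b*(y:ℂ)^2/(8*c))) := by
      funext s
      rw [rfZbar_eq, ← hc]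
      rw [show ((-Complex.I*(b:ℂ)/(8*c))*(s:ℂ)^2 + (-Complex.I*b*(y:ℂ)^2/(8*c)))
          = -(Complex.I*(b:ℂ)*((s:ℂ)^2+(y:ℂ)^2)) / (8*c) from by ring]
      rw [EE, ← hc]
      ring
    rw [hfun, ((hdB (-Complex.I*(b:ℂ)*α/(8*c^2)) ((α:ℂ)/c - Complex.I*b*α*(y:ℂ)^2/(8*c^2))
        (-Complex.I*b/(8*c)) (-Complex.I*b*(y:ℂ)^2/(8*c)) (x:ℂ)).comp_ofReal).deriv]
  have hdy : deriv (fun s : ℝ => rfZbar a b α t x s) y =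
      (2*(-Complex.I*(b:ℂ)*α/(8*c^2))*(y:ℂ)) *
        Complex.exp ((-Complex.I*b/(8*c))*(y:ℂ)^2 + (-Complex.I*b*(x:ℂ)^2/(8*c)))
      + ((-Complex.I*(b:ℂ)*α/(8*c^2))*(y:ℂ)^2 + ((α:ℂ)/c - Complex.I*b*α*(x:ℂ)^2/(8*c^2))) *
        (Complex.exp ((-Complex.I*b/(8*c))*(y:ℂ)^2 + (-Complex.I*b*(x:ℂ)^2/(8*c))) *
          (2*(-Complex.I*b/(8*c))*(y:ℂ))) := by
    have hfun : (fun s : ℝ => rfZbar a b α t x s)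
        = fun s : ℝ => ((-Complex.I*(b:ℂ)*α/(8*c^2))*(s:ℂ)^2
            + ((α:ℂ)/c - Complex.I*b*α*(x:ℂ)^2/(8*c^2))) *
            Complex.exp ((-Complex.I*b/(8*c))*(s:ℂ)^2 + (-Complex.I*b*(x:ℂ)^2/(8*c))) := by
      funext s
      rw [rfZbar_eq, ← hc]
      rw [show ((-Complex.I*(b:ℂ)/(8*c))*(s:ℂ)^2 + (-Complex.I*b*(x:ℂ)^2/(8*c)))
          = -(Complex.I*(b:ℂ)*((x:ℂ)^2+(s:ℂ)^2)) / (8*c) from by ring]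
      rw [EE, ← hc]
      ring
    rw [hfun, ((hdB (-Complex.I*(b:ℂ)*α/(8*c^2)) ((α:ℂ)/c - Complex.I*b*α*(x:ℂ)^2/(8*c^2))
        (-Complex.I*b/(8*c)) (-Complex.I*b*(x:ℂ)^2/(8*c)) (y:ℂ)).comp_ofReal).deriv]
  rw [rfZZbar, hdx, hdy]
  rw [show ((-Complex.I*(b:ℂ)/(8*c))*(x:ℂ)^2 + (-Complex.I*b*(y:ℂ)^2/(8*c)))
      = -(Complex.I*(b:ℂ)*((x:ℂ)^2+(y:ℂ)^2)) / (8*c) from by ring,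
     show ((-Complex.I*(b:ℂ)/(8*c))*(y:ℂ)^2 + (-Complex.I*b*(x:ℂ)^2/(8*c)))
      = -(Complex.I*(b:ℂ)*((x:ℂ)^2+(y:ℂ)^2)) / (8*c) from by ring]
  rw [show Complex.exp (-(Complex.I*(b:ℂ)*((x:ℂ)^2+(y:ℂ)^2)) / (8*c)) = EE a b t x y from rfl]
  set E := EE a b t x y
  linear_combination (E * ((b:ℂ)^2*α*((x:ℂ)^2+(y:ℂ)^2)*((x:ℂ)-Complex.I*(y:ℂ))/(32*c^3))) * Complex.I_sq

lemma deriv_rf_t (a b α t x y : ℝ) (ht : a + b * t ≠ 0) :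
    deriv (fun τ : ℝ => rf a b α τ x y) t =
      EE a b t x y * ((x:ℂ)-Complex.I*y) *
        (-(b:ℂ)*α/(2*(cC a b t)^2)
          + Complex.I*(b:ℂ)^2*α*((x:ℂ)^2+(y:ℂ)^2)/(16*(cC a b t)^3)) := by
  have hc0 : (a:ℂ) + (b:ℂ)*(t:ℂ) ≠ 0 := by
    intro h
    apply ht
    have : (((a + b*t : ℝ)):ℂ) = 0 := by push_cast; linear_combination h
    exact_mod_cast this
  set K : ℂ := (α:ℂ)*((x:ℂ)-Complex.I*y)/2
  set L : ℂ := -(Complex.I*(b:ℂ)*((x:ℂ)^2+(y:ℂ)^2))/8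
  have hfun : (fun τ : ℝ => rf a b α τ x y)
      = fun τ : ℝ => K/((a:ℂ)+(b:ℂ)*(τ:ℂ)) * Complex.exp (L/((a:ℂ)+(b:ℂ)*(τ:ℂ))) := by
    funext τ
    rw [rf_form, show ((a:ℂ) + (b:ℂ)*(τ:ℂ)) = cC a b τ from rfl, EE]
    rw [show K = (α:ℂ)*((x:ℂ)-Complex.I*y)/2 from rfl,
        show L = -(Complex.I*(b:ℂ)*((x:ℂ)^2+(y:ℂ)^2))/8 from rfl]
    congr 2
    ring
  rw [hfun, ((hdC K L (a:ℂ) (b:ℂ) (t:ℂ) hc0).comp_ofReal).deriv]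
  have hcc : (a:ℂ)+(b:ℂ)*(t:ℂ) = cC a b t := rfl
  rw [hcc]
  rw [show Complex.exp (L/cC a b t) = EE a b t x y from by
    rw [EE, show L = -(Complex.I*(b:ℂ)*((x:ℂ)^2+(y:ℂ)^2))/8 from rfl]; congr 1; ring]
  set c := cC a b t
  set E := EE a b t x y
  rw [show K = (α:ℂ)*((x:ℂ)-Complex.I*y)/2 from rfl,
      show L = -(Complex.I*(b:ℂ)*((x:ℂ)^2+(y:ℂ)^2))/8 from rfl]
  ring

lemma uf_eq (a b α t x y : ℝ) :
    uf a b α t x y = (α:ℂ)^2*((x:ℂ)^2+(y:ℂ)^2)/(2*(cC a b t)^2) := by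
  rw [uf, show 2*(α:ℂ)^2*zc x y*(starRingEnd ℂ) (zc x y)
      = 2*(α:ℂ)^2*(zc x y*(starRingEnd ℂ) (zc x y)) from by ring, hzz,
      show ((a:ℂ) + (b:ℂ)*(t:ℂ)) = cC a b t from rfl]
  ring

end SecondEq

theorem second_equation_holds (a b α : ℝ) (hb : b ≠ 0) (hα : α ^ 2 = b ^ 2 / 16) :
    ∀ t x y : ℝ, a + b * t ≠ 0 →
      Complex.I * deriv (fun τ => rf a b α τ x y) t - rfZZbar a b α t x y +
        2 * uf a b α t x y * rf a b α t x y = 0 := by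
  intro t x y ht
  have hαℂ : (α:ℂ)^2 = (b:ℂ)^2/16 := by exact_mod_cast congrArg (Complex.ofReal) hα
  rw [SecondEq.deriv_rf_t a b α t x y ht, SecondEq.rfZZbar_eq, SecondEq.uf_eq, SecondEq.rf_form]
  set c := SecondEq.cC a b t
  set E := SecondEq.EE a b t x y
  linear_combination (E*((x:ℂ)-Complex.I*(y:ℂ))*((x:ℂ)^2+(y:ℂ)^2)*(α:ℂ)/(2*c^3)) * hαℂ
    + ((b:ℂ)^2*(α:ℂ)*E*((x:ℂ)-Complex.I*(y:ℂ))*((x:ℂ)^2+(y:ℂ)^2)/(16*c^3)) * Complex.I_sq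
end
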